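/- Let A ∈ M_{m,n}(ℝ) and let K₁, K₂ be proper cones in ℝⁿ and ℝᵐ respectively. Then A + B is (K₁,K₂)-semipositive for every (K₁,K₂)-semipositive matrix B if and only if A(K₁) ⊆ K₂. -/

import Mathlib

open Matrix

/-- A proper cone in `ℝⁿ`: a topologically closed, pointed convex cone with
nonempty interior. -/
def IsProperCone {n : ℕ} (K : Set (Fin n → ℝ)) : Prop :=
  IsClosed K ∧ (∀ x ∈ K, ∀ y ∈ K, x + y ∈ K) ∧
    (∀ (c : ℝ), 0 ≤ c → ∀ x ∈ K, c • x ∈ K) ∧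
    (∀ x ∈ K, -x ∈ K → x = 0) ∧ (interior K).Nonempty

/-- `A` is `(K₁, K₂)`-semipositive: there is `x ∈ K₁°` with `Ax ∈ K₂°`. -/
def Semipositive {n m : ℕ} (K₁ : Set (Fin n → ℝ)) (K₂ : Set (Fin m → ℝ))
    (A : Matrix (Fin m) (Fin n) ℝ) : Prop :=
  ∃ x ∈ interior K₁, A *ᵥ x ∈ interior K₂

/-!
If `A(K₁) ⊆ K₂`, then `(A + B)x = Ax + Bx ∈ K₂ + K₂° ⊆ K₂°` for any witness `x` of the
semipositivity of `B`. Conversely, if `Ax ∉ K₂` for some `x ∈ K₁`, then, `K₂` being closed,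
also `Ax₀ ∉ K₂` for some `x₀ ∈ K₁°`. Farkas' lemma gives a functional `f ≥ 0` on `K₂` with
`f(Ax₀) < 0`; it is strictly positive on `K₂°`. For `d ∈ K₂°` the rank-one matrix
`B y = -(f(Ay) / f(d)) d` is semipositive (witness `x₀`), while `f ∘ (A + B) = 0`, so that
`A + B` maps nothing into `K₂°`.
-/

namespace IsProperCone

variable {n : ℕ} {K : Set (Fin n → ℝ)}

/-- Mathlib's `ProperCone` is merely a closed convex cone containing `0`. -/
def toProperCone (hK : IsProperCone K) : ProperCone ℝ (Fin n → ℝ) where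
  carrier := K
  add_mem' ha hb := hK.2.1 _ ha _ hb
  zero_mem' := by
    obtain ⟨x, hx⟩ := hK.2.2.2.2
    simpa using hK.2.2.1 0 le_rfl x (interior_subset hx)
  smul_mem' c x := hK.2.2.1 c c.2 x
  isClosed' := hK.1

lemma convex (hK : IsProperCone K) : Convex ℝ K :=
  fun a ha b hb s t hs ht _ => hK.2.1 _ (hK.2.2.1 s hs a ha) _ (hK.2.2.1 t ht b hb)

end IsProperCone

namespace ProperCone

open Pointwise

variable {E : Type*} [AddCommGroup E] [TopologicalSpace E] [Module ℝ E]
  {C : ProperCone ℝ E} {x y : E}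

lemma add_mem_interior [IsTopologicalAddGroup E] (hx : x ∈ C) (hy : y ∈ interior C) :
    x + y ∈ interior C :=
  interior_mono (Set.add_subset_iff.2 fun _ ha _ hb => C.add_mem ha hb)
    (subset_interior_add_right (Set.add_mem_add hx hy))

lemma smul_mem_interior [ContinuousConstSMul ℝ E] {c : ℝ} (hc : 0 < c) (hx : x ∈ interior C) :
    c • x ∈ interior C := by
  have hsub : c • (C : Set E) ⊆ C := by
    rintro _ ⟨z, hz, rfl⟩
    exact C.smul_mem hz hc.le
  exact interior_mono hsub
    (interior_smul₀ hc.ne' (C : Set E) ▸ Set.smul_mem_smul_set hx)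

lemma pos_of_mem_interior [ContinuousAdd E] [ContinuousSMul ℝ E] {f : StrongDual ℝ E}
    (hf : ∀ z ∈ C, 0 ≤ f z) (hf₀ : f ≠ 0) (hx : x ∈ interior C) : 0 < f x := by
  have hfC : f '' interior C ⊆ interior (Set.Ici 0) :=
    interior_maximal (Set.image_subset_iff.2 fun z hz => hf z (interior_subset hz))
      (f.isOpenMap_of_ne_zero hf₀ _ isOpen_interior)
  simpa using hfC ⟨x, hx, rfl⟩

end ProperCone

variable {n m : ℕ}

lemma exists_mem_interior_mulVec_notMem {K₁ : Set (Fin n → ℝ)} {K₂ : Set (Fin m → ℝ)}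
    (hK₁ : Convex ℝ K₁) (hK₁i : (interior K₁).Nonempty) (hK₂ : IsClosed K₂)
    {A : Matrix (Fin m) (Fin n) ℝ} {x : Fin n → ℝ} (hx : x ∈ K₁) (hAx : A *ᵥ x ∉ K₂) :
    ∃ x₀ ∈ interior K₁, A *ᵥ x₀ ∉ K₂ := by
  have hx' : x ∈ closure (interior K₁) := by
    rw [hK₁.closure_interior_eq_closure_of_nonempty_interior hK₁i]
    exact subset_closure hx
  have hU : IsOpen ((A *ᵥ ·) ⁻¹' K₂ᶜ) :=
    hK₂.isOpen_compl.preimage (LinearMap.continuous_of_finiteDimensional A.mulVecLin)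
  obtain ⟨x₀, hAx₀, hx₀⟩ := mem_closure_iff.1 hx' _ hU hAx
  exact ⟨x₀, hx₀, hAx₀⟩

lemma Semipositive.add_of_mapsTo {K₁ : Set (Fin n → ℝ)} {C₂ : ProperCone ℝ (Fin m → ℝ)}
    {A B : Matrix (Fin m) (Fin n) ℝ} (hA : ∀ x ∈ K₁, A *ᵥ x ∈ C₂)
    (hB : Semipositive K₁ C₂ B) : Semipositive K₁ C₂ (A + B) := by
  obtain ⟨x, hx, hBx⟩ := hB
  refine ⟨x, hx, ?_⟩
  rw [add_mulVec]
  exact C₂.add_mem_interior (hA x (interior_subset hx)) hBx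

lemma exists_semipositive_not_semipositive_add {K₁ : Set (Fin n → ℝ)}
    {C₂ : ProperCone ℝ (Fin m → ℝ)} (hC₂ : (interior (C₂ : Set (Fin m → ℝ))).Nonempty)
    {A : Matrix (Fin m) (Fin n) ℝ} {x₀ : Fin n → ℝ} (hx₀ : x₀ ∈ interior K₁)
    (hAx₀ : A *ᵥ x₀ ∉ C₂) :
    ∃ B, Semipositive K₁ C₂ B ∧ ¬ Semipositive K₁ C₂ (A + B) := by
  obtain ⟨f, hfC, hfAx₀⟩ := C₂.hyperplane_separation_point hAx₀
  have hf₀ : f ≠ 0 := by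
    rintro rfl
    simp at hfAx₀
  obtain ⟨d, hd⟩ := hC₂
  have hfd : 0 < f d := C₂.pos_of_mem_interior hfC hf₀ hd
  set φ : (Fin n → ℝ) →ₗ[ℝ] ℝ := -(f d)⁻¹ • (f.toLinearMap ∘ₗ A.mulVecLin) with hφ
  set B := LinearMap.toMatrix' (φ.smulRight d)
  have hB : ∀ y, B *ᵥ y = φ y • d := fun y => LinearMap.toMatrix'_mulVec _ y
  refine ⟨B, ⟨x₀, hx₀, ?_⟩, ?_⟩
  · have hφx₀ : 0 < φ x₀ := by
      simpa [hφ] using mul_pos (inv_pos.2 hfd) (neg_pos.2 hfAx₀)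
    rw [hB]
    exact C₂.smul_mem_interior hφx₀ hd
  · rintro ⟨y, -, hy⟩
    have hfy : f ((A + B) *ᵥ y) = 0 := by
      simp only [add_mulVec, map_add, hB, map_smul, hφ, LinearMap.smul_apply, LinearMap.comp_apply,
        mulVecLin_apply, ContinuousLinearMap.coe_coe, smul_eq_mul]
      field_simp
      ring
    exact (C₂.pos_of_mem_interior hfC hf₀ hy).ne' hfy

theorem stmt_3 {n m : ℕ} (K₁ : Set (Fin n → ℝ)) (K₂ : Set (Fin m → ℝ))
    (hK₁ : IsProperCone K₁) (hK₂ : IsProperCone K₂)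
    (A : Matrix (Fin m) (Fin n) ℝ) :
    (∀ B : Matrix (Fin m) (Fin n) ℝ, Semipositive K₁ K₂ B → Semipositive K₁ K₂ (A + B)) ↔
      ∀ x ∈ K₁, A *ᵥ x ∈ K₂ := by
  obtain ⟨C₂, rfl⟩ : ∃ C : ProperCone ℝ (Fin m → ℝ), (C : Set (Fin m → ℝ)) = K₂ :=
    ⟨hK₂.toProperCone, rfl⟩
  constructor
  · intro H x hx
    by_contra hAx
    obtain ⟨x₀, hx₀, hAx₀⟩ :=
      exists_mem_interior_mulVec_notMem hK₁.convex hK₁.2.2.2.2 hK₂.1 hx hAx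
    obtain ⟨B, hB, hAB⟩ := exists_semipositive_not_semipositive_add hK₂.2.2.2.2 hx₀ hAx₀
    exact hAB (H B hB)
  · exact fun hA B hB => hB.add_of_mapsTo hA
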